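/- Let a group G act by isometries on an ℝ-tree T, with the action nontrivial (no point of T is fixed by every element of G) and minimal (every nonempty G-invariant connected subset of T equals T). Suppose the collection of arc stabilizers satisfies the ascending chain condition: there is no infinite sequence A₁, A₂, A₃, … of nondegenerate arcs of T with Fix(A₁) ⊊ Fix(A₂) ⊊ Fix(A₃) ⊊ ⋯. Then the action is stable: every nondegenerate subtree of T contains a stable subtree. -/

import Mathlib

/-- An *arc* from `x` to `y` in a metric space: the image of a topological embedding of a
closed real interval `[a,b]` (with `a = b` allowed) sending `a` to `x` and `b` to `y`.
Since `[a,b]` is compact and a metric space is Hausdorff, a topological embedding is the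
same as a continuous injective map. -/
def IsArcIn {T : Type*} [MetricSpace T] (x y : T) (S : Set T) : Prop :=
  ∃ a b : ℝ, a ≤ b ∧ ∃ α : ℝ → T,
    ContinuousOn α (Set.Icc a b) ∧ Set.InjOn α (Set.Icc a b) ∧
    α '' Set.Icc a b = S ∧ α a = x ∧ α b = y

/-- A *geodesic segment* from `x` to `y`: the image of an isometric embedding of a closed
real interval sending the endpoints to `x` and `y`. -/
def IsGeodesicSegmentIn {T : Type*} [MetricSpace T] (x y : T) (S : Set T) : Prop :=
  ∃ a b : ℝ, a ≤ b ∧ ∃ α : ℝ → T,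
    (∀ s ∈ Set.Icc a b, ∀ t ∈ Set.Icc a b, dist (α s) (α t) = |s - t|) ∧
    α '' Set.Icc a b = S ∧ α a = x ∧ α b = y

/-- An ℝ-tree: a metric space in which any two points are joined by a unique arc,
and this arc is a geodesic segment. -/
def IsRTree (T : Type*) [MetricSpace T] : Prop :=
  ∀ x y : T, (∃! S : Set T, IsArcIn x y S) ∧
    ∀ S : Set T, IsArcIn x y S → IsGeodesicSegmentIn x y S

/-- The Gromov product `(x·y)_w = (d(w,x) + d(w,y) − d(x,y))/2`. -/
noncomputable def gromovProd {T : Type*} [MetricSpace T] (w x y : T) : ℝ :=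
  (dist w x + dist w y - dist x y) / 2

/-- A subset of an ℝ-tree is *nondegenerate* if it contains more than one point. -/
def Nondegenerate {T : Type*} (S : Set T) : Prop :=
  ∃ x ∈ S, ∃ y ∈ S, x ≠ y

/-- The pointwise stabilizer `Fix(S) = {g : G | g·x = x for all x ∈ S}` of a subset of an
ℝ-tree under an isometric action `ρ`. -/
def fixOf {G T : Type*} [Group G] [MetricSpace T] (ρ : G →* (T ≃ᵢ T)) (S : Set T) :
    Set G :=
  {g : G | ∀ x ∈ S, ρ g x = x}

/-- A *stable subtree* for the action `ρ`: a nondegenerate subtree (nonempty connected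
subset with more than one point) `S` such that every nondegenerate subtree of `S` has the
same pointwise stabilizer as `S`. -/
def IsStableSubtree {G T : Type*} [Group G] [MetricSpace T] (ρ : G →* (T ≃ᵢ T))
    (S : Set T) : Prop :=
  IsConnected S ∧ Nondegenerate S ∧
    ∀ S' : Set T, S' ⊆ S → IsConnected S' → Nondegenerate S' → fixOf ρ S' = fixOf ρ S


/-!
Pointwise stabilizers shrink as the arc grows, so the ascending chain condition makes the
nondegenerate arcs inside a nondegenerate subtree `S` well-founded for reverse inclusion of
stabilizers: some arc `A ⊆ S` has a stabilizer that no subarc enlarges. Every nondegenerate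
subtree of `A` contains a nondegenerate arc, hence has the same stabilizer as `A`.

The tree geometry enters through the fact that a connected subset of an ℝ-tree contains the arc
between any two of its points. This rests on the existence of medians: follow the geodesics from
`x` to `y` and from `x` to `z` up to their last common point `m`; the remaining pieces meet only
at `m`, so together they form the arc from `y` to `z`, which therefore passes through `m`.
-/

open Set

section RTree

variable {T : Type*} [MetricSpace T]

def IsometricOn (α : ℝ → T) (I : Set ℝ) : Prop :=
  ∀ s ∈ I, ∀ t ∈ I, dist (α s) (α t) = |s - t|

namespace IsometricOn

variable {α : ℝ → T} {I J : Set ℝ}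

theorem mono (hα : IsometricOn α I) (hJ : J ⊆ I) : IsometricOn α J :=
  fun s hs t ht => hα s (hJ hs) t (hJ ht)

theorem dist_eq_sub (hα : IsometricOn α I) {s t : ℝ} (hs : s ∈ I) (ht : t ∈ I) (hst : s ≤ t) :
    dist (α s) (α t) = t - s := by
  rw [hα s hs t ht, abs_sub_comm, abs_of_nonneg (sub_nonneg.2 hst)]

theorem continuousOn (hα : IsometricOn α I) : ContinuousOn α I :=
  (LipschitzOnWith.of_dist_le_mul (K := 1) fun s hs t ht => by
    rw [hα s hs t ht, Real.dist_eq, NNReal.coe_one, one_mul]).continuousOn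

theorem injOn (hα : IsometricOn α I) : InjOn α I := fun s hs t ht hst => by
  simpa [sub_eq_zero, hst] using (hα s hs t ht).symm

end IsometricOn

theorem IsGeodesicSegmentIn.isArcIn {x y : T} {A : Set T} (hA : IsGeodesicSegmentIn x y A) :
    IsArcIn x y A :=
  let ⟨a, b, hab, α, hα, hαA, hαa, hαb⟩ := hA
  ⟨a, b, hab, α, IsometricOn.continuousOn hα, IsometricOn.injOn hα, hαA, hαa, hαb⟩

theorem IsGeodesicSegmentIn.exists_isometricOn_Icc_zero {x y : T} {A : Set T}
    (hA : IsGeodesicSegmentIn x y A) :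
    ∃ δ : ℝ → T, IsometricOn δ (Icc 0 (dist x y)) ∧ δ 0 = x ∧ δ (dist x y) = y ∧
      δ '' Icc 0 (dist x y) = A := by
  obtain ⟨a, b, hab, α, hα, rfl, rfl, rfl⟩ := hA
  have hdist : dist (α a) (α b) = b - a :=
    IsometricOn.dist_eq_sub hα ⟨le_rfl, hab⟩ ⟨hab, le_rfl⟩ hab
  have hIcc : (· + a) '' Icc 0 (dist (α a) (α b)) = Icc a b := by
    rw [image_add_const_Icc, hdist, zero_add, sub_add_cancel]
  refine ⟨α ∘ (· + a), fun s hs t ht => ?_, by simp, by simp [hdist], by rw [image_comp, hIcc]⟩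
  simpa using hα (s + a) (hIcc ▸ mem_image_of_mem _ hs) (t + a) (hIcc ▸ mem_image_of_mem _ ht)

theorem IsArcIn.isConnected {x y : T} {A : Set T} (hA : IsArcIn x y A) : IsConnected A := by
  obtain ⟨a, b, hab, α, hα, -, rfl, -, -⟩ := hA
  exact (isConnected_Icc hab).image α hα

theorem IsArcIn.left_mem {x y : T} {A : Set T} (hA : IsArcIn x y A) : x ∈ A := by
  obtain ⟨a, b, hab, α, -, -, rfl, rfl, -⟩ := hA
  exact mem_image_of_mem α (left_mem_Icc.2 hab)

theorem IsArcIn.right_mem {x y : T} {A : Set T} (hA : IsArcIn x y A) : y ∈ A := by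
  obtain ⟨a, b, hab, α, -, -, rfl, -, rfl⟩ := hA
  exact mem_image_of_mem α (right_mem_Icc.2 hab)

def IsNondegenerateSegment (A : Set T) : Prop :=
  ∃ x y : T, x ≠ y ∧ IsGeodesicSegmentIn x y A

theorem IsNondegenerateSegment.isConnected {A : Set T} (hA : IsNondegenerateSegment A) :
    IsConnected A :=
  let ⟨_, _, _, hA⟩ := hA
  hA.isArcIn.isConnected

theorem IsNondegenerateSegment.nondegenerate {A : Set T} (hA : IsNondegenerateSegment A) :
    Nondegenerate A :=
  let ⟨x, y, hxy, hA⟩ := hA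
  ⟨x, hA.isArcIn.left_mem, y, hA.isArcIn.right_mem, hxy⟩

theorem exists_isArcIn_concat {α β : ℝ → T} {c a b : ℝ} (hca : c ≤ a) (hcb : c ≤ b)
    (hαc : ContinuousOn α (Icc c a)) (hβc : ContinuousOn β (Icc c b))
    (hαi : InjOn α (Icc c a)) (hβi : InjOn β (Icc c b)) (hc : α c = β c)
    (hαβ : ∀ s ∈ Icc c a, ∀ t ∈ Icc c b, α s = β t → s = c ∧ t = c) :
    ∃ A, IsArcIn (α a) (β b) A ∧ α c ∈ A := by
  let γ : ℝ → T := fun t => if t ≤ c then α (2 * c - t) else β t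
  have hreflect : MapsTo (2 * c - ·) (Icc (2 * c - a) c) (Icc c a) :=
    fun t ht => ⟨by linarith [ht.2], by linarith [ht.1]⟩
  have hγα : EqOn (α ∘ (2 * c - ·)) γ (Icc (2 * c - a) c) := fun t ht => by
    simp [γ, ht.2]
  have hγβ : EqOn β γ (Icc c b) := fun t ht => by
    rcases ht.1.eq_or_lt with rfl | hct
    · simp [γ, two_mul, hc]
    · simp [γ, not_le.2 hct]
  have hca' : 2 * c - a ≤ c := by linarith
  refine ⟨γ '' Icc (2 * c - a) b, ⟨2 * c - a, b, by linarith, γ, ?_, ?_, rfl, ?_, ?_⟩, ?_⟩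
  · rw [← Icc_union_Icc_eq_Icc hca' hcb]
    exact ((hαc.comp (by fun_prop) hreflect).congr hγα.symm).union_of_isClosed
      (hβc.congr hγβ.symm) isClosed_Icc isClosed_Icc
  · rw [← Icc_union_Ioc_eq_Icc hca' hcb, injOn_union
      ((Iic_disjoint_Ioi le_rfl).mono Icc_subset_Iic_self Ioc_subset_Ioi_self)]
    refine ⟨(hαi.comp (sub_right_injective.injOn) hreflect).congr hγα,
      (hβi.mono Ioc_subset_Icc_self).congr (hγβ.mono Ioc_subset_Icc_self), ?_⟩
    intro s hs t ht hst
    rw [← hγα hs, ← hγβ (Ioc_subset_Icc_self ht)] at hst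
    exact ht.1.ne' (hαβ _ (hreflect hs) t (Ioc_subset_Icc_self ht) hst).2
  · simp [γ, hca']
  · exact (hγβ ⟨hcb, le_rfl⟩).symm
  · exact ⟨c, ⟨hca', hcb⟩, by simp [γ, two_mul]⟩

theorem exists_last_common_point {α β : ℝ → T} {a b : ℝ}
    (ha : 0 ≤ a) (hb : 0 ≤ b) (hα : IsometricOn α (Icc 0 a)) (hβ : IsometricOn β (Icc 0 b))
    (h0 : α 0 = β 0) :
    ∃ c ∈ Icc 0 (min a b), α c = β c ∧
      ∀ s ∈ Icc c a, ∀ t ∈ Icc c b, α s = β t → s = c ∧ t = c := by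
  let K := {s ∈ Icc 0 (min a b) | α s = β s}
  have hKa : Icc 0 (min a b) ⊆ Icc 0 a := Icc_subset_Icc_right (min_le_left a b)
  have hKb : Icc 0 (min a b) ⊆ Icc 0 b := Icc_subset_Icc_right (min_le_right a b)
  have hKclosed : IsClosed K :=
    ((hα.continuousOn.mono hKa).prodMk (hβ.continuousOn.mono hKb)).preimage_isClosed_of_isClosed
      isClosed_Icc isClosed_diagonal
  have hKbdd : BddAbove K := bddAbove_Icc.mono (sep_subset _ _)
  have hcK : sSup K ∈ K :=
    hKclosed.csSup_mem ⟨0, ⟨le_rfl, le_min ha hb⟩, h0⟩ hKbdd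
  refine ⟨sSup K, hcK.1, hcK.2, fun s hs t ht hst => ?_⟩
  have hc0 := hcK.1.1
  have hst' : s = t := by
    rw [← sub_zero s, ← sub_zero t, ← hα.dist_eq_sub ⟨le_rfl, ha⟩ ⟨hc0.trans hs.1, hs.2⟩
      (hc0.trans hs.1), ← hβ.dist_eq_sub ⟨le_rfl, hb⟩ ⟨hc0.trans ht.1, ht.2⟩ (hc0.trans ht.1),
      h0, hst]
  subst hst'
  have hsK : s ∈ K := ⟨⟨hc0.trans hs.1, le_min hs.2 ht.2⟩, hst⟩
  have hsc : s ≤ sSup K := le_csSup hKbdd hsK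
  exact ⟨le_antisymm hsc hs.1, le_antisymm hsc hs.1⟩

namespace IsRTree

variable {T : Type*} [MetricSpace T] (h : IsRTree T)
include h

theorem eq_of_isArcIn {x y : T} {A B : Set T} (hA : IsArcIn x y A) (hB : IsArcIn x y B) :
    A = B :=
  (h x y).1.unique hA hB

theorem dist_add_dist_of_mem_isArcIn {x y p : T} {A : Set T} (hA : IsArcIn x y A)
    (hp : p ∈ A) : dist x p + dist p y = dist x y := by
  obtain ⟨a, b, hab, δ, hδ, rfl, rfl, rfl⟩ := (h x y).2 A hA
  obtain ⟨t, ht, rfl⟩ := hp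
  have hδ : IsometricOn δ (Icc a b) := hδ
  rw [hδ.dist_eq_sub ⟨le_rfl, hab⟩ ht ht.1, hδ.dist_eq_sub ht ⟨hab, le_rfl⟩ ht.2,
    hδ.dist_eq_sub ⟨le_rfl, hab⟩ ⟨hab, le_rfl⟩ hab]
  ring

theorem dist_eq_sub_of_mem_isArcIn {x y p q : T} {A : Set T} (hA : IsArcIn x y A)
    (hp : p ∈ A) (hq : q ∈ A) (hpq : dist x p ≤ dist x q) :
    dist p q = dist x q - dist x p := by
  obtain ⟨a, b, hab, δ, hδ, rfl, rfl, rfl⟩ := (h x y).2 A hA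
  obtain ⟨s, hs, rfl⟩ := hp
  obtain ⟨t, ht, rfl⟩ := hq
  have hδ : IsometricOn δ (Icc a b) := hδ
  rw [hδ.dist_eq_sub ⟨le_rfl, hab⟩ hs hs.1, hδ.dist_eq_sub ⟨le_rfl, hab⟩ ht ht.1] at hpq ⊢
  rw [hδ.dist_eq_sub hs ht (by linarith)]
  ring

theorem exists_median (x y z : T) :
    ∃ m, dist x m + dist m y = dist x y ∧ dist x m + dist m z = dist x z ∧
      dist y m + dist m z = dist y z ∧ ∀ A, IsArcIn x z A → m ∈ A := by
  obtain ⟨A, hA⟩ := (h x y).1.exists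
  obtain ⟨B, hB⟩ := (h x z).1.exists
  obtain ⟨α, hα, hαx, hαy, -⟩ := ((h x y).2 A hA).exists_isometricOn_Icc_zero
  obtain ⟨β, hβ, hβx, hβz, hβB⟩ := ((h x z).2 B hB).exists_isometricOn_Icc_zero
  obtain ⟨c, hc, hαβc, hαβ⟩ :=
    exists_last_common_point dist_nonneg dist_nonneg hα hβ (hαx.trans hβx.symm)
  have hca : c ∈ Icc 0 (dist x y) := ⟨hc.1, hc.2.trans (min_le_left _ _)⟩
  have hcb : c ∈ Icc 0 (dist x z) := ⟨hc.1, hc.2.trans (min_le_right _ _)⟩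
  obtain ⟨C, hC, hcC⟩ := exists_isArcIn_concat hca.2 hcb.2
    (hα.continuousOn.mono (Icc_subset_Icc_left hca.1))
    (hβ.continuousOn.mono (Icc_subset_Icc_left hcb.1))
    (hα.injOn.mono (Icc_subset_Icc_left hca.1)) (hβ.injOn.mono (Icc_subset_Icc_left hcb.1))
    hαβc hαβ
  rw [hαy, hβz] at hC
  have hxm : dist x (α c) = c := by
    rw [← hαx, hα.dist_eq_sub ⟨le_rfl, dist_nonneg⟩ hca hca.1, sub_zero]
  have hmy : dist (α c) y = dist x y - c := by
    rw [← hαy, hα.dist_eq_sub hca ⟨dist_nonneg, le_rfl⟩ hca.2, hαy]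
  have hmz : dist (α c) z = dist x z - c := by
    rw [← hβz, hαβc, hβ.dist_eq_sub hcb ⟨dist_nonneg, le_rfl⟩ hcb.2, hβz]
  refine ⟨α c, by rw [hxm, hmy]; ring, by rw [hxm, hmz]; ring,
    h.dist_add_dist_of_mem_isArcIn hC hcC, fun A' hA' => ?_⟩
  rw [h.eq_of_isArcIn hA' hB, ← hβB, hαβc]
  exact mem_image_of_mem β hcb

theorem mem_isArcIn_of_dist_add_dist {x y p : T} {A : Set T} (hA : IsArcIn x y A)
    (hp : dist x p + dist p y = dist x y) : p ∈ A := by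
  obtain ⟨m, hxmp, hxmy, hpmy, hmA⟩ := h.exists_median x p y
  have hmp : m = p := dist_eq_zero.1 (by linarith [dist_comm m p, dist_nonneg (x := m) (y := p)])
  exact hmp ▸ hmA A hA

theorem dist_add_dist_eq_of_dist_lt {x p z z' : T} (hp : dist x p + dist p z = dist x z)
    (hz' : dist z z' < dist p z) : dist x p + dist p z' = dist x z' := by
  obtain ⟨A, hA⟩ := (h x z).1.exists
  obtain ⟨m, hxmz', hxmz, hz'mz, hmA⟩ := h.exists_median x z' z
  have hpm : dist p m = dist x m - dist x p :=
    h.dist_eq_sub_of_mem_isArcIn hA (h.mem_isArcIn_of_dist_add_dist hA hp) (hmA A hA)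
      (by linarith [dist_nonneg (x := z') (y := m), dist_comm z z'])
  linarith [dist_triangle p m z', dist_triangle x p z']

theorem isArcIn_subset_of_isPreconnected {x y : T} {A S : Set T} (hS : IsPreconnected S)
    (hx : x ∈ S) (hy : y ∈ S) (hA : IsArcIn x y A) : A ⊆ S := by
  intro p hp
  by_contra hpS
  have hpx : 0 < dist x p := dist_pos.2 fun hxp => hpS (hxp ▸ hx)
  have hpy : y ≠ p := fun hyp => hpS (hyp ▸ hy)
  -- `U` and `V` split `T \ {p}` according to whether `p` lies on the arc from `x`
  let U := {w | dist x w < dist x p + dist p w}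
  let V := {w | w ≠ p ∧ dist x p + dist p w = dist x w}
  have hU : IsOpen U := isOpen_lt (by fun_prop) (by fun_prop)
  have hV : IsOpen V := by
    refine Metric.isOpen_iff.2 fun w hw => ⟨dist p w, dist_pos.2 hw.1.symm, fun w' hw' => ?_⟩
    rw [Metric.mem_ball, dist_comm] at hw'
    refine ⟨?_, h.dist_add_dist_eq_of_dist_lt hw.2 hw'⟩
    rintro rfl
    exact (dist_comm w _ ▸ hw').false
  have hSUV : S ⊆ U ∪ V := fun w hw =>
    (dist_triangle x p w).lt_or_eq.imp id fun hxw => ⟨fun hwp => hpS (hwp ▸ hw), hxw.symm⟩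
  obtain ⟨w, -, hwU, hwV⟩ := hS U V hU hV hSUV
    ⟨x, hx, by simpa [U] using hpx.trans_le (le_add_of_nonneg_right dist_nonneg)⟩
    ⟨y, hy, hpy, h.dist_add_dist_of_mem_isArcIn hA hp⟩
  exact hwU.ne hwV.2.symm

theorem exists_isNondegenerateSegment_subset {S : Set T}
    (hS : IsPreconnected S) (hnd : Nondegenerate S) :
    ∃ A ⊆ S, IsNondegenerateSegment A := by
  obtain ⟨x, hx, y, hy, hxy⟩ := hnd
  obtain ⟨A, hA⟩ := (h x y).1.exists
  exact ⟨A, h.isArcIn_subset_of_isPreconnected hS hx hy hA, x, y, hxy, (h x y).2 A hA⟩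

end IsRTree

end RTree

section Stability

variable {T G : Type*} [MetricSpace T] [Group G] {ρ : G →* (T ≃ᵢ T)}

theorem fixOf_anti {A B : Set T} (hAB : A ⊆ B) : fixOf ρ B ⊆ fixOf ρ A :=
  fun _ hg x hx => hg x (hAB hx)

theorem IsNondegenerateSegment.isStableSubtree (h : IsRTree T) {A : Set T}
    (hA : IsNondegenerateSegment A)
    (hfix : ∀ B ⊆ A, IsNondegenerateSegment B → fixOf ρ B ⊆ fixOf ρ A) :
    IsStableSubtree ρ A := by
  refine ⟨hA.isConnected, hA.nondegenerate, fun S hSA hS hnd => ?_⟩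
  obtain ⟨B, hBS, hB⟩ := h.exists_isNondegenerateSegment_subset hS.isPreconnected hnd
  exact ((fixOf_anti hBS).trans (hfix B (hBS.trans hSA) hB)).antisymm (fixOf_anti hSA)

end Stability

theorem stable_of_acc_arc_stabilizers_general {T : Type*} [MetricSpace T] (h : IsRTree T)
    {G : Type*} [Group G] (ρ : G →* (T ≃ᵢ T))
    (hacc : ¬ ∃ A : ℕ → Set T,
      (∀ n, ∃ x y : T, x ≠ y ∧ IsGeodesicSegmentIn x y (A n)) ∧
      (∀ n, fixOf ρ (A n) ⊂ fixOf ρ (A (n + 1)))) :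
    ∀ S : Set T, IsConnected S → Nondegenerate S →
      ∃ S' : Set T, S' ⊆ S ∧ IsStableSubtree ρ S' := by
  intro S hS hnd
  have hwf : WellFounded fun A B : {A : Set T // IsNondegenerateSegment A} =>
      fixOf ρ B.1 ⊂ fixOf ρ A.1 :=
    wellFounded_iff_isEmpty_descending_chain.2
      ⟨fun ⟨A, hA⟩ => hacc ⟨fun n => (A n).1, fun n => (A n).2, hA⟩⟩
  obtain ⟨A₀, hA₀S, hA₀⟩ := h.exists_isNondegenerateSegment_subset hS.isPreconnected hnd
  obtain ⟨⟨A, hA⟩, hAS, hAmax⟩ := hwf.has_min {A | A.1 ⊆ S} ⟨⟨A₀, hA₀⟩, hA₀S⟩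
  refine ⟨A, hAS, hA.isStableSubtree h fun B hBA hB => ?_⟩
  by_contra hne
  exact hAmax ⟨B, hB⟩ (hBA.trans hAS) ((fixOf_anti hBA).ssubset_of_not_subset hne)

/-- If a nontrivial minimal isometric action of `G` on an ℝ-tree has arc stabilizers
satisfying the ascending chain condition, then the action is stable: every nondegenerate
subtree contains a stable subtree. -/
theorem stable_of_acc_arc_stabilizers {T : Type*} [MetricSpace T] (h : IsRTree T)
    {G : Type*} [Group G] (ρ : G →* (T ≃ᵢ T))
    (hnt : ¬ ∃ x : T, ∀ g : G, ρ g x = x)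
    (hmin : ∀ S : Set T, S.Nonempty → IsPreconnected S →
      (∀ g : G, ∀ x ∈ S, ρ g x ∈ S) → S = Set.univ)
    (hacc : ¬ ∃ A : ℕ → Set T,
      (∀ n, ∃ x y : T, x ≠ y ∧ IsGeodesicSegmentIn x y (A n)) ∧
      (∀ n, fixOf ρ (A n) ⊂ fixOf ρ (A (n + 1)))) :
    ∀ S : Set T, IsConnected S → Nondegenerate S →
      ∃ S' : Set T, S' ⊆ S ∧ IsStableSubtree ρ S' :=
  stable_of_acc_arc_stabilizers_general h ρ hacc
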